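/- Let $H_1$ be exponential with mean $\lambda_1 > 0$ and $\bar{H}_3$ exponential with mean $\kappa_2\lambda_3 > 0$, independent, and let $\vartheta_2, \vartheta_3, \rho > 0$. Then $Y = \frac{\vartheta_3\rho H_1}{\vartheta_2\rho \bar{H}_3 + 1}$ has complementary CDF $P(Y > y) = \frac{\vartheta_3\lambda_1}{\vartheta_3\lambda_1 + \vartheta_2\kappa_2\lambda_3 y} e^{-y/(\vartheta_3\rho\lambda_1)}$ for $y \geq 0$. -/

import Mathlib

/-!
Conditionally on `H̄₃ = z`, the event `Y > y` is `H₁ > y (ϑ₂ ρ z + 1) / (ϑ₃ ρ)`, which has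
probability `exp (-y (ϑ₂ ρ z + 1) / (ϑ₃ ρ λ₁))` by the exponential tail of `H₁`. Averaging over
`H̄₃` leaves `exp (-y / (ϑ₃ ρ λ₁))` times the Laplace transform `E[exp (-s H̄₃)] = r / (r + s)` of
`H̄₃` (rate `r = 1 / (κ₂ λ₃)`) at `s = y ϑ₂ / (ϑ₃ λ₁)`.
-/

open MeasureTheory ProbabilityTheory Real Set

namespace ProbabilityTheory

lemma expMeasure_Ioi {r c : ℝ} (hr : 0 < r) (hc : 0 ≤ c) :
    expMeasure r (Ioi c) = ENNReal.ofReal (exp (-(r * c))) := by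
  have := isProbabilityMeasure_expMeasure hr
  rw [← measure_cdf (expMeasure r), StieltjesFunction.measure_Ioi _ (tendsto_cdf_atTop _),
    cdf_expMeasure_eq hr, if_pos hc, sub_sub_cancel]

lemma ae_nonneg_expMeasure (r : ℝ) : ∀ᵐ x ∂expMeasure r, 0 ≤ x := by
  rw [ae_iff]
  simp only [not_le]
  exact (withDensity_apply _ measurableSet_Iio).trans (lintegral_exponentialPDF_of_nonpos le_rfl)

lemma lintegral_exp_neg_mul_expMeasure {r s : ℝ} (hr : 0 < r) (hrs : 0 < r + s) :
    ∫⁻ z, ENNReal.ofReal (exp (-(s * z))) ∂expMeasure r = ENNReal.ofReal (r / (r + s)) := by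
  have hdensity : ∀ z, exponentialPDF r z * ENNReal.ofReal (exp (-(s * z)))
      = (Ici 0).indicator (fun z ↦ ENNReal.ofReal (r * exp (-(r + s) * z))) z := by
    intro z
    rcases lt_or_ge z 0 with hz | hz
    · simp [exponentialPDF_of_neg hz, hz]
    · rw [exponentialPDF_of_nonneg hz, indicator_of_mem (show z ∈ Ici 0 from hz),
        ← ENNReal.ofReal_mul (by positivity), mul_assoc, ← exp_add]
      ring_nf
  have hint : IntegrableOn (fun z ↦ r * exp (-(r + s) * z)) (Ici 0) :=
    ((integrableOn_Ici_iff_integrableOn_Ioi ..).mpr (exp_neg_integrableOn_Ioi 0 hrs)).const_mul r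
  rw [show expMeasure r = volume.withDensity (exponentialPDF r) from rfl,
    lintegral_withDensity_eq_lintegral_mul _ (f := exponentialPDF r)
      (measurable_exponentialPDFReal r).ennreal_ofReal (by fun_prop)]
  simp only [Pi.mul_apply]
  rw [lintegral_congr hdensity, lintegral_indicator measurableSet_Ici,
    ← ofReal_integral_eq_lintegral_ofReal hint (ae_of_all _ fun z ↦ by positivity),
    integral_Ici_eq_integral_Ioi, integral_const_mul, integral_exp_mul_Ioi (by linarith)]
  congr 1
  field_simp
  simp

lemma measure_lt_of_indepFun_expMeasure {Ω : Type*} [MeasurableSpace Ω] {μ : Measure Ω}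
    [IsFiniteMeasure μ] {X Z : Ω → ℝ} (hX : Measurable X) (hZ : Measurable Z)
    (hind : IndepFun X Z μ) {r : ℝ} (hr : 0 < r) (hXlaw : μ.map X = expMeasure r) {g : ℝ → ℝ}
    (hg : Measurable g) (hg₀ : ∀ᵐ z ∂μ.map Z, 0 ≤ g z) :
    μ {ω | g (Z ω) < X ω} = ∫⁻ z, ENNReal.ofReal (exp (-(r * g z))) ∂μ.map Z := by
  have := isProbabilityMeasure_expMeasure hr
  have hS : MeasurableSet {p : ℝ × ℝ | g p.1 < p.2} :=
    measurableSet_lt (hg.comp measurable_fst) measurable_snd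
  have hjoint : μ.map (fun ω ↦ (Z ω, X ω)) = (μ.map Z).prod (expMeasure r) := by
    rw [← hXlaw]
    exact (indepFun_iff_map_prod_eq_prod_map_map hZ.aemeasurable hX.aemeasurable).mp hind.symm
  calc μ {ω | g (Z ω) < X ω} = μ.map (fun ω ↦ (Z ω, X ω)) {p | g p.1 < p.2} :=
        (Measure.map_apply (hZ.prodMk hX) hS).symm
    _ = ∫⁻ z, expMeasure r (Ioi (g z)) ∂μ.map Z := by
        rw [hjoint, Measure.prod_apply hS]
        rfl
    _ = ∫⁻ z, ENNReal.ofReal (exp (-(r * g z))) ∂μ.map Z :=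
        lintegral_congr_ae (hg₀.mono fun z hz ↦ expMeasure_Ioi hr hz)

end ProbabilityTheory

/-- complementary CDF of the SINR of s₃ under imperfect SIC. -/
theorem sinr_s3_ccdf
    {Ω : Type*} [MeasurableSpace Ω] (μ : Measure Ω) [IsProbabilityMeasure μ]
    (H₁ H₃' : Ω → ℝ) (hH₁ : Measurable H₁) (hH₃' : Measurable H₃')
    (hind : IndepFun H₁ H₃' μ)
    (lam₁ lam₃ κ₂ ϑ₂ ϑ₃ ρ : ℝ) (hlam₁ : 0 < lam₁) (hκlam₃ : 0 < κ₂ * lam₃)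
    (hϑ₂ : 0 < ϑ₂) (hϑ₃ : 0 < ϑ₃) (hρ : 0 < ρ)
    (hH₁law : μ.map H₁ = expMeasure (1 / lam₁))
    (hH₃law : μ.map H₃' = expMeasure (1 / (κ₂ * lam₃))) :
    ∀ y : ℝ, 0 ≤ y →
      μ {ω | y < ϑ₃ * ρ * H₁ ω / (ϑ₂ * ρ * H₃' ω + 1)}
        = ENNReal.ofReal
            (ϑ₃ * lam₁ / (ϑ₃ * lam₁ + ϑ₂ * κ₂ * lam₃ * y)
              * Real.exp (-(y / (ϑ₃ * ρ * lam₁)))) := by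
  intro y hy
  have hH₃_nonneg : ∀ᵐ ω ∂μ, 0 ≤ H₃' ω :=
    ae_of_ae_map hH₃'.aemeasurable (hH₃law ▸ ae_nonneg_expMeasure _)
  have hevent : {ω | y < ϑ₃ * ρ * H₁ ω / (ϑ₂ * ρ * H₃' ω + 1)}
      =ᵐ[μ] {ω | y * (ϑ₂ * ρ * H₃' ω + 1) / (ϑ₃ * ρ) < H₁ ω} := by
    filter_upwards [hH₃_nonneg] with ω hω
    apply propext
    change y < _ ↔ (_ : ℝ) < _
    rw [lt_div_iff₀ (by positivity), div_lt_iff₀ (by positivity), mul_comm (H₁ ω)]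
  have hexp_split : ∀ z, exp (-(1 / lam₁ * (y * (ϑ₂ * ρ * z + 1) / (ϑ₃ * ρ))))
      = exp (-(y / (ϑ₃ * ρ * lam₁))) * exp (-(y * ϑ₂ / (ϑ₃ * lam₁) * z)) := by
    intro z
    rw [← exp_add]
    congr 1
    field_simp
    ring
  rw [measure_congr hevent, measure_lt_of_indepFun_expMeasure hH₁ hH₃' hind (by positivity) hH₁law
    (g := fun z ↦ y * (ϑ₂ * ρ * z + 1) / (ϑ₃ * ρ)) (by fun_prop)
    (hH₃law ▸ (ae_nonneg_expMeasure _).mono fun z hz ↦ by positivity), hH₃law]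
  simp_rw [hexp_split, ENNReal.ofReal_mul (exp_pos _).le]
  rw [lintegral_const_mul _ (by fun_prop),
    lintegral_exp_neg_mul_expMeasure (by positivity) (by positivity),
    ← ENNReal.ofReal_mul (by positivity), mul_comm]
  congr 2
  have hκ₂ : κ₂ ≠ 0 := by rintro rfl; simp at hκlam₃
  have hlam₃ : lam₃ ≠ 0 := by rintro rfl; simp at hκlam₃
  field_simp
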